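/- Let ε > 0, let C ∈ (ℝ ∪ {+∞})^{N×N} and set K = exp(−C/ε) elementwise. Consider (𝒯+2)-mode tensors indexed by (ℓ, i_0, i_1, …, i_𝒯) with ℓ ∈ Fin L and i_j ∈ Fin N, and define K̂(ℓ, i_0,…,i_𝒯) = Π_{t=0}^{𝒯−1} K_{i_t, i_{t+1}} and Û(ℓ, i_0,…,i_𝒯) = U_{−1,0}(ℓ, i_0) · Π_{j=1}^{𝒯} U_{−1,j}(ℓ, i_j) · Π_{j=1}^{𝒯} u_j(i_j), where U_{−1,j} ∈ ℝ^{L×N} for j = 0,…,𝒯 and u_j ∈ ℝ^N for j = 1,…,𝒯. Define L×N matrices Ψ̂_1 = U_{−1,0} K; Ψ̂_j = (Ψ̂_{j−1} ⊙ U_{−1,j−1}) diag(u_{j−1}) K for j = 2,…,𝒯; Ψ_{𝒯−1} = U_{−1,𝒯} diag(u_𝒯) K^T; Ψ_j = (Ψ_{j+1} ⊙ U_{−1,j+1}) diag(u_{j+1}) K^T for j = 0,…,𝒯−2. Then the bimarginal projections of K̂ ⊙ Û onto the species mode (mode −1) and the time modes satisfy: P_{−1,0}(K̂ ⊙ Û)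 = U_{−1,0} ⊙ Ψ_0; P_{−1,j}(K̂ ⊙ Û) = Ψ̂_j ⊙ Ψ_j ⊙ (U_{−1,j} diag(u_j)) for j = 1,…,𝒯−1; and P_{−1,𝒯}(K̂ ⊙ Û) = (U_{−1,𝒯} diag(u_𝒯)) ⊙ Ψ̂_𝒯. -/

import Mathlib

/-!
For a fixed species `ℓ`, `K̂ ⊙ Û` is the weight of a path `x₀ → ⋯ → x_𝒯`: a start weight
`U_{-1,0}(ℓ, ·)` followed by the transfer matrices `K diag(U_{-1,t}(ℓ, ·) u_t)`. Summing out every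
coordinate except `x_j` factorises, by distributivity, into a forward message (the start weight
pushed through the transfer matrices before `j`) times a backward message (the constant `1` pulled
back through those after `j`). The recursions defining `Ψ̂_j` and `Ψ_j` are exactly those of the
messages, up to the node weight `U_{-1,j} diag(u_j)` that the forward message carries.
-/

open scoped BigOperators
open Filter Matrix

noncomputable section

/-- The bimarginal projection of a multi-species tensor onto the species mode and the
time mode `j`: `(P_{-1,j}(M))_{ℓ,i} = ∑_{x : x j = i} M(ℓ, x)`. -/
def msBiproj {L m N : ℕ} (j : Fin (m + 1)) (M : Fin L × (Fin (m + 1) → Fin N) → ℝ) :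
    Matrix (Fin L) (Fin N) ℝ :=
  Matrix.of fun ℓ i => ∑ x : Fin (m + 1) → Fin N, if x j = i then M (ℓ, x) else 0

/-- The marginal projection of a multi-species tensor onto the time mode `j`. -/
def msProj {L m N : ℕ} (j : Fin (m + 1)) (M : Fin L × (Fin (m + 1) → Fin N) → ℝ) :
    Fin N → ℝ :=
  fun i => ∑ ℓ : Fin L, ∑ x : Fin (m + 1) → Fin N, if x j = i then M (ℓ, x) else 0

/-- `exp(-c/ε)` with the convention `exp(-∞) = 0`. -/
def expNegE (ε : ℝ) (c : EReal) : ℝ :=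
  if c = ⊤ then 0 else Real.exp (-c.toReal / ε)

section ChainMessages

variable {R n : Type*} [CommSemiring R]

theorem Fin.sum_univ_pi_succ [Fintype n] {M : Type*} [AddCommMonoid M] {m : ℕ}
    (F : (Fin (m + 1) → n) → M) : ∑ x, F x = ∑ a, ∑ y, F (Fin.cons a y) := by
  rw [← (Fin.consEquiv fun _ => n).sum_comp, Fintype.sum_prod_type]
  rfl

def pathWeight (E : ℕ → Matrix n n R) (f h : n → R) {m : ℕ} (x : Fin (m + 1) → n) : R :=
  f (x 0) * (∏ t : Fin m, E t (x t.castSucc) (x t.succ)) * h (x (Fin.last m))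

def fwdMessage [Fintype n] (E : ℕ → Matrix n n R) (f : n → R) : ℕ → n → R
  | 0 => f
  | j + 1 => fwdMessage E f j ᵥ* E j

-- `bwdMessage E h j d = E j *ᵥ E (j + 1) *ᵥ ⋯ *ᵥ E (j + d - 1) *ᵥ h`
def bwdMessage [Fintype n] (E : ℕ → Matrix n n R) (h : n → R) (j : ℕ) : ℕ → n → R
  | 0 => h
  | d + 1 => E j *ᵥ bwdMessage E h (j + 1) d

theorem fwdMessage_succ_eq_shift [Fintype n] (E : ℕ → Matrix n n R) (f : n → R) (j : ℕ) :
    fwdMessage E f (j + 1) = fwdMessage (fun t => E (t + 1)) (f ᵥ* E 0) j := by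
  induction j with
  | zero => rfl
  | succ j ih => rw [fwdMessage, ih, fwdMessage]

theorem bwdMessage_shift [Fintype n] (E : ℕ → Matrix n n R) (h : n → R) (j d : ℕ) :
    bwdMessage (fun t => E (t + 1)) h j d = bwdMessage E h (j + 1) d := by
  induction d generalizing j with
  | zero => rfl
  | succ d ih => rw [bwdMessage, ih, bwdMessage]

theorem pathWeight_eq_mul (E : ℕ → Matrix n n R) (f h : n → R) {m : ℕ} (x : Fin (m + 1) → n) :
    pathWeight E f h x = f (x 0) * pathWeight E 1 h x := by
  simp only [pathWeight, Pi.one_apply, one_mul, mul_assoc]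

theorem pathWeight_cons (E : ℕ → Matrix n n R) (f h : n → R) {m : ℕ} (a : n)
    (y : Fin (m + 1) → n) :
    pathWeight E f h (Fin.cons a y : Fin (m + 2) → n)
      = f a * E 0 a (y 0) * pathWeight (fun t => E (t + 1)) 1 h y := by
  simp only [pathWeight, Fin.prod_univ_succ, Fin.cons_zero, Fin.castSucc_zero, Fin.val_zero,
    ← Fin.succ_castSucc, Fin.cons_succ, ← Fin.succ_last, Pi.one_apply, one_mul, Fin.val_succ]
  ring

theorem sum_pathWeight_cons [Fintype n] (E : ℕ → Matrix n n R) (f h : n → R) {m : ℕ}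
    (y : Fin (m + 1) → n) :
    ∑ a, pathWeight E f h (Fin.cons a y : Fin (m + 2) → n)
      = pathWeight (fun t => E (t + 1)) (f ᵥ* E 0) h y := by
  simp only [pathWeight_cons, ← Finset.sum_mul]
  rw [pathWeight_eq_mul _ (f ᵥ* E 0)]
  rfl

theorem sum_pathWeight_ite_eq [Fintype n] [DecidableEq n] (E : ℕ → Matrix n n R) (f h : n → R)
    {m : ℕ} (j : Fin (m + 1)) (i : n) :
    ∑ x : Fin (m + 1) → n, (if x j = i then pathWeight E f h x else 0)
      = fwdMessage E f j i * bwdMessage E h j (m - j) i := by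
  induction m generalizing E f i with
  | zero =>
    rw [Fin.fin_one_eq_zero j, Fin.sum_univ_pi_succ]
    simp [pathWeight, fwdMessage, bwdMessage, Fin.last]
  | succ m ih =>
    rw [Fin.sum_univ_pi_succ]
    cases j using Fin.cases with
    | zero =>
      -- after fixing `x₀ = i`, what is left is the total mass of the shorter chain
      have hmass : ∑ y : Fin (m + 1) → n, pathWeight (fun t => E (t + 1)) (E 0 i) h y
          = (E 0 *ᵥ bwdMessage E h 1 m) i := by
        rw [← Finset.sum_fiberwise Finset.univ fun y => y 0]
        simp only [Finset.sum_filter, ih, fwdMessage, Fin.val_zero, Nat.sub_zero, bwdMessage_shift]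
        rfl
      simp only [Fin.cons_zero, Finset.sum_ite_irrel, Finset.sum_const_zero, Finset.sum_ite_eq',
        Finset.mem_univ, if_true, pathWeight_cons]
      simp only [mul_assoc, ← Finset.mul_sum, ← pathWeight_eq_mul, hmass]
      rfl
    | succ j =>
      -- summing out `x₀` folds `E 0` into the start vector
      simp only [Fin.cons_succ]
      rw [Finset.sum_comm]
      simp only [Finset.sum_ite_irrel, Finset.sum_const_zero, sum_pathWeight_cons, ih,
        ← fwdMessage_succ_eq_shift, bwdMessage_shift]
      simp [Fin.val_succ]

end ChainMessages

section Species

variable {R n σ : Type*} [CommSemiring R] [Fintype n] [DecidableEq n]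

def speciesKernel (K : Matrix n n R) (U : ℕ → Matrix σ n R) (u : ℕ → n → R) (ℓ : σ) (t : ℕ) :
    Matrix n n R :=
  K * diagonal (U (t + 1) ℓ * u (t + 1))

theorem vecMul_mul_diagonal (v : n → R) (A : Matrix n n R) (w : n → R) :
    v ᵥ* (A * diagonal w) = (v ᵥ* A) * w := by
  ext i
  rw [← vecMul_vecMul, vecMul_diagonal, Pi.mul_apply]

theorem mul_diagonal_mulVec (A : Matrix n n R) (w v : n → R) :
    (A * diagonal w) *ᵥ v = A *ᵥ (w * v) := by
  rw [← mulVec_mulVec]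
  congr 1
  ext i
  rw [mulVec_diagonal, Pi.mul_apply]

theorem row_mul_diagonal (A : Matrix σ n R) (w : n → R) (ℓ : σ) :
    (A * diagonal w) ℓ = A ℓ * w :=
  funext fun i => mul_diagonal w A ℓ i

theorem row_hadamard_mul_diagonal_mul (A B : Matrix σ n R) (w : n → R) (M : Matrix n n R)
    (ℓ : σ) : (A ⊙ B * diagonal w * M) ℓ = (A ℓ * B ℓ * w) ᵥ* M := by
  rw [mul_apply_eq_vecMul, row_mul_diagonal]
  rfl

theorem pathWeight_speciesKernel (K : Matrix n n R) (U : ℕ → Matrix σ n R) (u : ℕ → n → R)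
    (ℓ : σ) {m : ℕ} (x : Fin (m + 1) → n) :
    pathWeight (speciesKernel K U u ℓ) (U 0 ℓ) 1 x
      = (∏ t : Fin m, K (x t.castSucc) (x t.succ)) *
        (U 0 ℓ (x 0) * ∏ t : Fin m, (U (t + 1) ℓ (x t.succ) * u (t + 1) (x t.succ))) := by
  simp only [pathWeight, speciesKernel, mul_diagonal, Pi.mul_apply, Pi.one_apply, mul_one,
    Finset.prod_mul_distrib]
  ring

theorem fwdMessage_speciesKernel {K : Matrix n n R} {U : ℕ → Matrix σ n R} {u : ℕ → n → R}
    {m : ℕ} {hatPsi : ℕ → Matrix σ n R} (hhat1 : hatPsi 1 = U 0 * K)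
    (hhatrec : ∀ j : ℕ, 2 ≤ j → j ≤ m →
      hatPsi j = ((hatPsi (j - 1)).hadamard (U (j - 1))) * Matrix.diagonal (u (j - 1)) * K)
    (ℓ : σ) {j : ℕ} (hj₁ : 1 ≤ j) (hjm : j ≤ m) :
    fwdMessage (speciesKernel K U u ℓ) (U 0 ℓ) j = hatPsi j ℓ * (U j ℓ * u j) := by
  induction j, hj₁ using Nat.le_induction with
  | base => rw [fwdMessage, fwdMessage, speciesKernel, vecMul_mul_diagonal, hhat1]; rfl
  | succ j hj ih =>
    rw [fwdMessage, ih (by omega), speciesKernel, vecMul_mul_diagonal,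
      hhatrec (j + 1) (by omega) hjm, Nat.add_sub_cancel, row_hadamard_mul_diagonal_mul, mul_assoc (hatPsi j ℓ)]

theorem bwdMessage_speciesKernel {K : Matrix n n R} {U : ℕ → Matrix σ n R} {u : ℕ → n → R}
    {m : ℕ} {Psi : ℕ → Matrix σ n R}
    (hpsiLast : Psi (m - 1) = U m * Matrix.diagonal (u m) * Kᵀ)
    (hpsirec : ∀ j : ℕ, j + 2 ≤ m →
      Psi j = ((Psi (j + 1)).hadamard (U (j + 1))) * Matrix.diagonal (u (j + 1)) * Kᵀ)
    (ℓ : σ) {j : ℕ} (hjm : j < m) :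
    bwdMessage (speciesKernel K U u ℓ) 1 j (m - j) = Psi j ℓ := by
  obtain ⟨d, hd⟩ : ∃ d, m - j = d + 1 := ⟨m - j - 1, by omega⟩
  induction d generalizing j with
  | zero =>
    obtain rfl : j = m - 1 := by omega
    rw [hd, bwdMessage, bwdMessage, speciesKernel, mul_diagonal_mulVec, mul_one, hpsiLast,
      mul_apply_eq_vecMul, vecMul_transpose, Nat.sub_add_cancel (by omega), row_mul_diagonal]
  | succ d ih =>
    have hnext := ih (j := j + 1) (by omega) (by omega)
    rw [show m - (j + 1) = d + 1 by omega] at hnext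
    rw [hd, bwdMessage, hnext, speciesKernel, mul_diagonal_mulVec, hpsirec j (by omega),
      row_hadamard_mul_diagonal_mul, vecMul_transpose]
    congr 1
    ring

end Species

theorem multispecies_bimarginal_projections_general
    (L N m : ℕ) (hm : 1 ≤ m)
    (K : Matrix (Fin N) (Fin N) ℝ)
    (Um : ℕ → Matrix (Fin L) (Fin N) ℝ) (u : ℕ → Fin N → ℝ)
    (Khat Uhat : Fin L × (Fin (m + 1) → Fin N) → ℝ)
    (hKhat : ∀ ℓ x, Khat (ℓ, x) = ∏ t : Fin m, K (x t.castSucc) (x t.succ))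
    (hUhat : ∀ ℓ x, Uhat (ℓ, x) = Um 0 ℓ (x 0) *
      ∏ t : Fin m, (Um ((t : ℕ) + 1) ℓ (x t.succ) * u ((t : ℕ) + 1) (x t.succ)))
    (hatPsi Psi : ℕ → Matrix (Fin L) (Fin N) ℝ)
    (hhat1 : hatPsi 1 = Um 0 * K)
    (hhatrec : ∀ j : ℕ, 2 ≤ j → j ≤ m →
      hatPsi j = ((hatPsi (j - 1)).hadamard (Um (j - 1))) * Matrix.diagonal (u (j - 1)) * K)
    (hpsiLast : Psi (m - 1) = Um m * Matrix.diagonal (u m) * Kᵀ)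
    (hpsirec : ∀ j : ℕ, j + 2 ≤ m →
      Psi j = ((Psi (j + 1)).hadamard (Um (j + 1))) * Matrix.diagonal (u (j + 1)) * Kᵀ)
    :
    (msBiproj (0 : Fin (m + 1)) (fun p => Khat p * Uhat p) = (Um 0).hadamard (Psi 0)) ∧
    (∀ j : Fin (m + 1), 0 < (j : ℕ) → (j : ℕ) < m →
      msBiproj j (fun p => Khat p * Uhat p)
        = ((hatPsi (j : ℕ)).hadamard (Psi (j : ℕ))).hadamard
            (Um (j : ℕ) * Matrix.diagonal (u (j : ℕ)))) ∧
    (msBiproj (Fin.last m) (fun p => Khat p * Uhat p)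
        = (Um m * Matrix.diagonal (u m)).hadamard (hatPsi m)) := by
  have hmarg : ∀ (j : Fin (m + 1)) ℓ i, msBiproj j (fun p => Khat p * Uhat p) ℓ i
      = fwdMessage (speciesKernel K Um u ℓ) (Um 0 ℓ) j i *
        bwdMessage (speciesKernel K Um u ℓ) 1 j (m - j) i := by
    intro j ℓ i
    simp only [msBiproj, of_apply, hKhat, hUhat, ← pathWeight_speciesKernel, sum_pathWeight_ite_eq]
  refine ⟨?_, fun j hj₀ hjm => ?_, ?_⟩
  · ext ℓ i
    rw [hmarg, Fin.val_zero, hadamard_apply, bwdMessage_speciesKernel hpsiLast hpsirec ℓ hm]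
    rfl
  · ext ℓ i
    rw [hmarg, fwdMessage_speciesKernel hhat1 hhatrec ℓ hj₀ hjm.le,
      bwdMessage_speciesKernel hpsiLast hpsirec ℓ hjm, hadamard_apply, hadamard_apply,
      row_mul_diagonal]
    simp only [Pi.mul_apply]
    ring
  · ext ℓ i
    rw [hmarg, Fin.val_last, Nat.sub_self, fwdMessage_speciesKernel hhat1 hhatrec ℓ hm le_rfl,
      bwdMessage, hadamard_apply, row_mul_diagonal]
    simp only [Pi.mul_apply, Pi.one_apply, mul_one]
    ring

/-- Sinkhorn-type computation of the species-time bimarginal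
projections of the multi-species tensor `K̂ ⊙ Û`. -/
theorem multispecies_bimarginal_projections
    (L N m : ℕ) (hm : 1 ≤ m) (ε : ℝ) (hε : 0 < ε)
    (C : Matrix (Fin N) (Fin N) EReal) (hC : ∀ i k, C i k ≠ ⊥)
    (K : Matrix (Fin N) (Fin N) ℝ) (hK : ∀ i k, K i k = expNegE ε (C i k))
    (Um : ℕ → Matrix (Fin L) (Fin N) ℝ) (u : ℕ → Fin N → ℝ)
    (Khat Uhat : Fin L × (Fin (m + 1) → Fin N) → ℝ)
    (hKhat : ∀ ℓ x, Khat (ℓ, x) = ∏ t : Fin m, K (x t.castSucc) (x t.succ))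
    (hUhat : ∀ ℓ x, Uhat (ℓ, x) = Um 0 ℓ (x 0) *
      ∏ t : Fin m, (Um ((t : ℕ) + 1) ℓ (x t.succ) * u ((t : ℕ) + 1) (x t.succ)))
    (hatPsi Psi : ℕ → Matrix (Fin L) (Fin N) ℝ)
    (hhat1 : hatPsi 1 = Um 0 * K)
    (hhatrec : ∀ j : ℕ, 2 ≤ j → j ≤ m →
      hatPsi j = ((hatPsi (j - 1)).hadamard (Um (j - 1))) * Matrix.diagonal (u (j - 1)) * K)
    (hpsiLast : Psi (m - 1) = Um m * Matrix.diagonal (u m) * Kᵀ)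
    (hpsirec : ∀ j : ℕ, j + 2 ≤ m →
      Psi j = ((Psi (j + 1)).hadamard (Um (j + 1))) * Matrix.diagonal (u (j + 1)) * Kᵀ)
    :
    (msBiproj (0 : Fin (m + 1)) (fun p => Khat p * Uhat p) = (Um 0).hadamard (Psi 0)) ∧
    (∀ j : Fin (m + 1), 0 < (j : ℕ) → (j : ℕ) < m →
      msBiproj j (fun p => Khat p * Uhat p)
        = ((hatPsi (j : ℕ)).hadamard (Psi (j : ℕ))).hadamard
            (Um (j : ℕ) * Matrix.diagonal (u (j : ℕ)))) ∧
    (msBiproj (Fin.last m) (fun p => Khat p * Uhat p)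
        = (Um m * Matrix.diagonal (u m)).hadamard (hatPsi m)) :=
  multispecies_bimarginal_projections_general L N m hm K Um u Khat Uhat hKhat hUhat hatPsi Psi hhat1
    hhatrec hpsiLast hpsirec
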